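/- For every integer n ≥ 6, the positive co-degree Turán number of F₅ satisfies co⁺ex(n, F₅) = ⌊n/3⌋. -/

import Mathlib

open Finset

/-- The co-degree of a vertex set `S` in the hypergraph with edge set `E`:
the number of edges containing `S`. -/
def coDeg {n : ℕ} (E : Finset (Finset (Fin n))) (S : Finset (Fin n)) : ℕ :=
  (E.filter (fun e => S ⊆ e)).card

/-- The minimum positive co-degree `δ⁺_{r-1}` of an `r`-graph on `Fin n` with edge set `E`:
the largest `k` such that every `(r-1)`-set of vertices contained in at least one edge is
contained in at least `k` edges (i.e. the minimum of the positive co-degrees). -/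
noncomputable def minPosCoDeg (r n : ℕ) (E : Finset (Finset (Fin n))) : ℕ :=
  sInf {d : ℕ | ∃ S : Finset (Fin n), S.card = r - 1 ∧ coDeg E S = d ∧ 0 < d}

/-- `E` contains a copy of `F`: an injection of the vertices of `F` mapping
edges of `F` to edges of `E`. -/
def Contains {α β : Type*} [DecidableEq α] [DecidableEq β]
    (F : Finset (Finset α)) (E : Finset (Finset β)) : Prop :=
  ∃ f : α → β, Function.Injective f ∧ ∀ e ∈ F, e.image f ∈ E

/-- The positive co-degree Turán number `co⁺ex_r(n, F)`: the maximum of the minimum positive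
co-degree over all `F`-free `r`-graphs on `n` vertices with at least one edge. -/
noncomputable def coPlusEx {α : Type*} [DecidableEq α] (r n : ℕ) (F : Finset (Finset α)) : ℕ :=
  sSup {d : ℕ | ∃ E : Finset (Finset (Fin n)),
    (∀ e ∈ E, e.card = r) ∧ E.Nonempty ∧ ¬ Contains F E ∧ minPosCoDeg r n E = d}


def K4minus : Finset (Finset (Fin 4)) := {{0,1,2}, {0,1,3}, {0,2,3}}

def K4 : Finset (Finset (Fin 4)) := {{0,1,2}, {0,1,3}, {0,2,3}, {1,2,3}}

def F5 : Finset (Finset (Fin 5)) := {{0,1,2}, {0,1,3}, {2,3,4}}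

def F32 : Finset (Finset (Fin 5)) := {{0,1,2}, {0,3,4}, {1,3,4}, {2,3,4}}

def Fano : Finset (Finset (Fin 7)) :=
  {{0,1,2}, {2,3,4}, {0,4,5}, {1,3,5}, {0,3,6}, {1,4,6}, {2,5,6}}

def F33 : Finset (Finset (Fin 6)) :=
  {{0,1,2}, {0,3,4}, {0,3,5}, {0,4,5}, {1,3,4}, {1,3,5}, {1,4,5}, {2,3,4}, {2,3,5}, {2,4,5}}

def C5 : Finset (Finset (Fin 5)) := {{0,1,2}, {1,2,3}, {2,3,4}, {0,3,4}, {0,1,4}}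

def C5minus : Finset (Finset (Fin 5)) := {{0,1,2}, {1,2,3}, {2,3,4}, {0,3,4}}

def K222 : Finset (Finset (Fin 6)) :=
  {{0,2,4}, {0,2,5}, {0,3,4}, {0,3,5}, {1,2,4}, {1,2,5}, {1,3,4}, {1,3,5}}

/-- `J k`: the 3-graph on `k+1` vertices whose edges are all triples containing the
distinguished vertex `0`. -/
def Jgraph (k : ℕ) : Finset (Finset (Fin (k+1))) :=
  (Finset.univ.powersetCard 3).filter (fun e => (0 : Fin (k+1)) ∈ e)

/-- `E` is (isomorphic to) the complete balanced `k`-partite 3-graph on `n` vertices: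
there is a partition of the vertices into `k` classes whose sizes differ by at most one,
such that the edges are exactly the triples of vertices in three pairwise distinct classes. -/
def IsCompleteBalancedMultipartite (n k : ℕ) (E : Finset (Finset (Fin n))) : Prop :=
  ∃ f : Fin n → Fin k,
    (∀ i j : Fin k, (Finset.univ.filter (fun v => f v = i)).card ≤
      (Finset.univ.filter (fun v => f v = j)).card + 1) ∧
    ∀ e : Finset (Fin n), e ∈ E ↔ (e.card = 3 ∧ (e.image f).card = 3)

/-- The unique (6,3,2)-design `H₆`. -/
def H6 : Finset (Finset (Fin 6)) :=
  {{0,1,2}, {0,1,3}, {2,3,4}, {2,3,5}, {0,4,5}, {1,4,5}, {0,2,4}, {0,3,5}, {1,2,5}, {1,3,4}}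

/-- `E` is (isomorphic to) a balanced blow-up of `H₆` on `n` vertices: the vertices are
partitioned into six classes of equal size, and the edges are exactly the triples whose
three vertices lie in classes forming an edge of `H₆`. -/
def IsBalancedH6Blowup (n : ℕ) (E : Finset (Finset (Fin n))) : Prop :=
  ∃ f : Fin n → Fin 6,
    (∀ i j : Fin 6, (Finset.univ.filter (fun v => f v = i)).card =
      (Finset.univ.filter (fun v => f v = j)).card) ∧
    ∀ e : Finset (Fin n), e ∈ E ↔ (e.card = 3 ∧ e.image f ∈ H6)

/-!
Upper bound: take an edge `xyz` of an `F₅`-free 3-graph `H` with `δ₂⁺(H) > n/3`. The links of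
`xy`, `yz` and `xz` each have more than `n/3` vertices, so two of them meet, say in `v` with
`xyv, yzv ∈ H`. As `n ≥ 6`, the link of `xz` has a vertex `w ≠ y, v`, and `xyv, yzv, xzw` is a
copy of `F₅`.

Lower bound: the complete 3-partite 3-graph with classes the residues mod 3 is `F₅`-free, since
`F₅` is not 3-partite, and a pair in two classes lies in an edge with every vertex of the third.
-/

section CoDegree

variable {n : ℕ} {E : Finset (Finset (Fin n))} {r : ℕ}

theorem minPosCoDeg_le_coDeg {S : Finset (Fin n)} (hS : #S = r - 1) (hpos : 0 < coDeg E S) :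
    minPosCoDeg r n E ≤ coDeg E S :=
  Nat.sInf_le ⟨S, hS, rfl, hpos⟩

theorem le_minPosCoDeg {k : ℕ} (hr : ∀ e ∈ E, #e = r) (hne : E.Nonempty)
    (hk : ∀ S : Finset (Fin n), #S = r - 1 → 0 < coDeg E S → k ≤ coDeg E S) :
    k ≤ minPosCoDeg r n E := by
  obtain ⟨e, he⟩ := hne
  obtain ⟨S, hSe, hS⟩ := exists_subset_card_eq (s := e) (n := r - 1) (hr e he ▸ Nat.sub_le r 1)
  have hpos : 0 < coDeg E S := card_pos.2 ⟨e, mem_filter.2 ⟨he, hSe⟩⟩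
  refine le_csInf ⟨_, S, hS, rfl, hpos⟩ ?_
  rintro _ ⟨T, hT, rfl, hTpos⟩
  exact hk T hT hTpos

theorem coPlusEx_eq_of_forall_le_of_exists {α : Type*} [DecidableEq α] {k : ℕ}
    {F : Finset (Finset α)}
    (hle : ∀ E : Finset (Finset (Fin n)), (∀ e ∈ E, #e = r) → E.Nonempty → ¬ Contains F E →
      minPosCoDeg r n E ≤ k)
    (hex : ∃ E : Finset (Finset (Fin n)), (∀ e ∈ E, #e = r) ∧ E.Nonempty ∧ ¬ Contains F E ∧
      k ≤ minPosCoDeg r n E) :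
    coPlusEx r n F = k := by
  refine IsGreatest.csSup_eq ⟨?_, ?_⟩
  · obtain ⟨E, hr, hne, hF, hk⟩ := hex
    exact ⟨E, hr, hne, hF, (hle E hr hne hF).antisymm hk⟩
  · rintro _ ⟨E, hr, hne, hF, rfl⟩
    exact hle E hr hne hF

end CoDegree

section Link

variable {α : Type*} [Fintype α] [DecidableEq α]

def link (E : Finset (Finset α)) (a b : α) : Finset α :=
  {v | v ≠ a ∧ v ≠ b ∧ {a, b, v} ∈ E}

variable {E : Finset (Finset α)} {a b v : α}

@[simp]
theorem mem_link : v ∈ link E a b ↔ v ≠ a ∧ v ≠ b ∧ {a, b, v} ∈ E := by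
  simp [link]

theorem link_comm (E : Finset (Finset α)) (a b : α) : link E a b = link E b a := by
  ext v
  simp only [mem_link, insert_comm a b]
  tauto

end Link

section CoDegreeOfPair

variable {n : ℕ} {E : Finset (Finset (Fin n))} {a b : Fin n}

theorem coDeg_pair (h3 : ∀ e ∈ E, #e = 3) (hab : a ≠ b) : coDeg E {a, b} = #(link E a b) := by
  symm
  refine card_nbij (fun v => {a, b, v}) ?_ ?_ ?_
  · intro v hv
    simp only [mem_coe, mem_link, mem_filter] at hv ⊢
    exact ⟨hv.2.2, by simp [insert_subset_iff]⟩
  · intro v hv v' hv' h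
    simp only [mem_coe, mem_link] at hv hv'
    have : v ∈ ({a, b, v'} : Finset (Fin n)) := by
      simp only at h
      rw [← h]
      simp
    simp_all
  · intro e he
    obtain ⟨heE, hsub⟩ := mem_filter.1 he
    obtain ⟨v, hv⟩ : ∃ v, e \ {a, b} = {v} := card_eq_one.1 <| by
      rw [card_sdiff_of_subset hsub, h3 e heE, card_pair hab]
    have hvab : v ∉ ({a, b} : Finset (Fin n)) := (mem_sdiff.1 (hv ▸ mem_singleton_self v)).2
    have hev : {a, b, v} = e := by
      rw [← union_sdiff_of_subset hsub, hv]
      simp [insert_union]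
    refine ⟨v, ?_, hev⟩
    simp_all

theorem minPosCoDeg_le_card_link (h3 : ∀ e ∈ E, #e = 3) (hab : a ≠ b) {c : Fin n}
    (hc : c ∈ link E a b) : minPosCoDeg 3 n E ≤ #(link E a b) := by
  rw [← coDeg_pair h3 hab]
  exact minPosCoDeg_le_coDeg (card_pair hab) (coDeg_pair h3 hab ▸ card_pos.2 ⟨c, hc⟩)

end CoDegreeOfPair

theorem inter_nonempty_of_card_lt_card_add_card_add_card {α : Type*} [Fintype α] [DecidableEq α]
    {A B C : Finset α} (h : Fintype.card α < #A + #B + #C) :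
    (A ∩ B).Nonempty ∨ (A ∩ C).Nonempty ∨ (B ∩ C).Nonempty := by
  rw [or_iff_not_imp_left, not_nonempty_iff_eq_empty, ← disjoint_iff_inter_eq_empty]
  intro hAB
  rw [← union_nonempty, ← union_inter_distrib_right]
  exact inter_nonempty_of_card_lt_card_add_card (subset_univ _) (subset_univ _)
    (by rwa [card_union_of_disjoint hAB, card_univ])

theorem contains_F5_of_mem_link {α : Type*} [Fintype α] [DecidableEq α] {E : Finset (Finset α)}
    {a b c v : α} (hab : a ≠ b) (hbc : b ≠ c) (hac : a ≠ c) (hva : v ∈ link E a b)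
    (hvc : v ∈ link E b c) (hcard : 2 < #(link E a c)) : Contains F5 E := by
  obtain ⟨w, hw, hwbv⟩ :=
    exists_mem_notMem_of_card_lt_card (s := {b, v}) (card_le_two.trans_lt hcard)
  simp only [mem_link, mem_insert, mem_singleton, not_or] at hva hvc hw hwbv
  refine ⟨![b, v, a, c, w], ?_, ?_⟩
  · intro i j hij
    fin_cases i <;> fin_cases j <;> simp_all [eq_comm]
  · simp only [F5, forall_mem_insert, forall_eq, mem_singleton, image_insert, image_singleton]
    exact ⟨by simpa [pair_comm v a, insert_comm b a] using hva.2.2,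
      by simpa [pair_comm v c] using hvc.2.2, by simpa using hw.2.2⟩

theorem minPosCoDeg_le_of_not_contains_F5 {n : ℕ} (hn : 6 ≤ n) {E : Finset (Finset (Fin n))}
    (h3 : ∀ e ∈ E, #e = 3) (hne : E.Nonempty) (hF : ¬ Contains F5 E) :
    minPosCoDeg 3 n E ≤ n / 3 := by
  by_contra! hlt
  obtain ⟨e, he⟩ := hne
  obtain ⟨x, y, z, hxy, hxz, hyz, rfl⟩ := card_eq_three.1 (h3 e he)
  have large {a b c : Fin n} (hab : a ≠ b) (hc : c ∈ link E a b) : n / 3 < #(link E a b) :=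
    hlt.trans_le (minPosCoDeg_le_card_link h3 hab hc)
  have hxy' := large hxy (c := z) (mem_link.2 ⟨hxz.symm, hyz.symm, he⟩)
  have hyz' := large hyz (c := x)
    (mem_link.2 ⟨hxy, hxz, by rwa [pair_comm z x, insert_comm y x]⟩)
  have hxz' := large hxz (c := y) (mem_link.2 ⟨hxy.symm, hyz, by rwa [pair_comm z y]⟩)
  rcases inter_nonempty_of_card_lt_card_add_card_add_card (A := link E x y) (B := link E y z)
    (C := link E x z) (by simp only [Fintype.card_fin]; omega) with ⟨v, hv⟩ | ⟨v, hv⟩ | ⟨v, hv⟩ <;>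
    rw [mem_inter] at hv
  · exact hF (contains_F5_of_mem_link hxy hyz hxz hv.1 hv.2 (by omega))
  · exact hF (contains_F5_of_mem_link hxy.symm hxz hyz (link_comm E x y ▸ hv.1) hv.2 (by omega))
  · exact hF (contains_F5_of_mem_link hyz hxz.symm hxy.symm hv.1 (link_comm E x z ▸ hv.2)
      (by rw [link_comm]; omega))

theorem not_contains_F5_of_injOn {β : Type*} [DecidableEq β] {E : Finset (Finset β)}
    (f : β → Fin 3) (hE : ∀ e ∈ E, Set.InjOn f e) : ¬ Contains F5 E := by
  rintro ⟨g, hg, hgE⟩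
  have hF5 : ∀ e ∈ F5, Set.InjOn (f ∘ g) e := fun e he =>
    (hE _ (hgE e he)).comp hg.injOn fun i hi => mem_image_of_mem g hi
  simp [F5, Set.injOn_insert] at hF5
  -- `2` and `3` both get the colour missed by `0` and `1`, yet `{2, 3, 4}` is an edge.
  omega

section CompleteTripartite

variable {α : Type*} [Fintype α] {f : α → Fin 3}

variable (f) in
def completeTripartite : Finset (Finset α) := {e | #e = 3 ∧ #(e.image f) = 3}

@[simp]
theorem mem_completeTripartite {e : Finset α} :
    e ∈ completeTripartite f ↔ #e = 3 ∧ #(e.image f) = 3 := by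
  simp [completeTripartite]

theorem injOn_of_mem_completeTripartite {e : Finset α} (he : e ∈ completeTripartite f) :
    Set.InjOn f e :=
  card_image_iff.1 ((mem_completeTripartite.1 he).2.trans (mem_completeTripartite.1 he).1.symm)

theorem completeTripartite_nonempty (hf : Function.Surjective f) :
    (completeTripartite f).Nonempty := by
  classical
  obtain ⟨g, hg⟩ := hf.hasRightInverse
  refine ⟨univ.image g, ?_⟩
  have : (univ.image g).image f = univ := by simp [image_image, hg.comp_eq_id]
  rw [mem_completeTripartite, this, card_image_of_injective _ hg.injective]
  simp

end CompleteTripartite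

theorem le_minPosCoDeg_completeTripartite {n k : ℕ} {f : Fin n → Fin 3}
    (hf : Function.Surjective f) (hk : ∀ i, k ≤ #{v | f v = i}) :
    k ≤ minPosCoDeg 3 n (completeTripartite f) := by
  have h3 : ∀ e ∈ completeTripartite f, #e = 3 := fun e he => (mem_completeTripartite.1 he).1
  refine le_minPosCoDeg h3 (completeTripartite_nonempty hf) fun S hS hpos => ?_
  obtain ⟨a, b, hab, rfl⟩ := card_eq_two.1 hS
  rw [coDeg_pair h3 hab] at hpos ⊢
  obtain ⟨u, hu⟩ := card_pos.1 hpos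
  have hfab : f a ≠ f b :=
    (injOn_of_mem_completeTripartite (mem_link.1 hu).2.2).ne (by simp) (by simp) hab
  obtain ⟨i, hia, hib⟩ := (by decide : ∀ p q : Fin 3, ∃ i, i ≠ p ∧ i ≠ q) (f a) (f b)
  refine (hk i).trans (card_le_card fun v hv => ?_)
  replace hv : f v = i := (mem_filter.1 hv).2
  have hva : v ≠ a := by rintro rfl; exact hia hv.symm
  have hvb : v ≠ b := by rintro rfl; exact hib hv.symm
  refine mem_link.2 ⟨hva, hvb, mem_completeTripartite.2
    ⟨card_eq_three.2 ⟨a, b, v, hab, hva.symm, hvb.symm, rfl⟩, ?_⟩⟩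
  rw [image_insert, image_insert, image_singleton, hv]
  exact card_eq_three.2 ⟨f a, f b, i, hfab, hia.symm, hib.symm, rfl⟩

def residueMod3 (n : ℕ) (v : Fin n) : Fin 3 := Fin.ofNat 3 v

theorem residueMod3_surjective {n : ℕ} (hn : 3 ≤ n) : Function.Surjective (residueMod3 n) :=
  fun i => ⟨⟨i, by omega⟩, Fin.ext <| by simp [residueMod3]⟩

theorem div_three_le_card_filter_residueMod3_eq {n : ℕ} (i : Fin 3) :
    n / 3 ≤ #{v | residueMod3 n v = i} :=
  calc n / 3 = #(univ : Finset (Fin (n / 3))) := by simp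
    _ ≤ _ := by
      refine card_le_card_of_injOn (fun j => ⟨3 * j + i, by omega⟩) (fun j _ => ?_) ?_
      · simp [residueMod3, Fin.ext_iff]
      · intro j _ j' _ h
        simp only [Fin.ext_iff] at h
        omega

/-- For every integer `n ≥ 6`, `co⁺ex(n, F₅) = ⌊n/3⌋`. -/
theorem coPlusEx_F5 (n : ℕ) (hn : 6 ≤ n) :
    coPlusEx 3 n F5 = n / 3 := by
  have hsurj := residueMod3_surjective (show 3 ≤ n by omega)
  refine coPlusEx_eq_of_forall_le_of_exists (fun _ => minPosCoDeg_le_of_not_contains_F5 hn)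
    ⟨completeTripartite (residueMod3 n), fun e he => (mem_completeTripartite.1 he).1,
      completeTripartite_nonempty hsurj, ?_, ?_⟩
  · exact not_contains_F5_of_injOn _ fun e => injOn_of_mem_completeTripartite
  · exact le_minPosCoDeg_completeTripartite hsurj div_three_le_card_filter_residueMod3_eq
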